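/- Let φ be a weakly right invariant fuzzy quasi-order on a fuzzy automaton A. Then the crisp-deterministic fuzzy automaton A_φ is isomorphic to the Nerode automaton of the afterset fuzzy automaton A/φ. -/
import Mathlib


namespace FuzzyAut

/-- Composition of fuzzy relations. -/
def rcomp {L : Type*} [CompleteLattice L] [CommMonoid L] {A B C : Type*}
    (α : A → B → L) (β : B → C → L) : A → C → L :=
  fun a c => ⨆ b, α a b * β b c

/-- Composition of a fuzzy set with a fuzzy relation. -/
def scomp {L : Type*} [CompleteLattice L] [CommMonoid L] {A B : Type*}
    (f : A → L) (α : A → B → L) : B → L :=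
  fun b => ⨆ a, f a * α a b

/-- Composition of a fuzzy relation with a fuzzy set. -/
def rscomp {L : Type*} [CompleteLattice L] [CommMonoid L] {A B : Type*}
    (α : A → B → L) (g : B → L) : A → L :=
  fun a => ⨆ b, α a b * g b

/-- Scalar composition of two fuzzy sets. -/
def sscomp {L : Type*} [CompleteLattice L] [CommMonoid L] {A : Type*}
    (f g : A → L) : L := ⨆ a, f a * g a

/-- The crisp equality fuzzy relation. -/
def eqRel {L : Type*} [CompleteLattice L] [CommMonoid L] (A : Type*) : A → A → L :=
  fun a b => ⨆ _ : a = b, (1 : L)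

/-- The fuzzy transition relation extended to words. -/
def relWord {L : Type*} [CompleteLattice L] [CommMonoid L] {A X : Type*}
    (δ : X → A → A → L) : List X → A → A → L
  | [] => eqRel A
  | x :: u => rcomp (δ x) (relWord δ u)

/-- The family φ_u : φ_ε = σ∘φ, φ_{ux} = φ_u∘δ_x∘φ. -/
def phiFam {L : Type*} [CompleteLattice L] [CommMonoid L] {A X : Type*}
    (σ : A → L) (δ : X → A → A → L) (φ : A → A → L) (u : List X) : A → L :=
  u.foldl (fun f x => scomp (scomp f (δ x)) φ) (scomp σ φ)

/-- The family ψ^u : ψ^ε = ψ∘τ, ψ^{xu} = ψ∘δ_x∘ψ^u. -/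
def psiFam {L : Type*} [CompleteLattice L] [CommMonoid L] {A X : Type*}
    (τ : A → L) (δ : X → A → A → L) (ψ : A → A → L) : List X → A → L
  | [] => rscomp ψ τ
  | x :: u => rscomp ψ (rscomp (δ x) (psiFam τ δ ψ u))

/-- Reflexivity of a fuzzy relation. -/
def IsRefl {L : Type*} [CompleteLattice L] [CommMonoid L] {A : Type*}
    (φ : A → A → L) : Prop := ∀ a, φ a a = 1

/-- Transitivity of a fuzzy relation. -/
def IsTrans {L : Type*} [CompleteLattice L] [CommMonoid L] {A : Type*}
    (φ : A → A → L) : Prop := ∀ a b c, φ a b * φ b c ≤ φ a c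

/-- The set of aftersets of a fuzzy relation φ (states of the afterset automaton A/φ). -/
def Aft {L : Type*} [CompleteLattice L] [CommMonoid L] {A : Type*} (φ : A → A → L) :=
  {f : A → L // ∃ a : A, f = fun b => φ a b}

/-- The afterset of a state. -/
def aft {L : Type*} [CompleteLattice L] [CommMonoid L] {A : Type*} (φ : A → A → L)
    (a : A) : Aft φ := ⟨fun b => φ a b, a, rfl⟩

/-- A representative of an afterset. -/
noncomputable def rep {L : Type*} [CompleteLattice L] [CommMonoid L] {A : Type*}
    {φ : A → A → L} (s : Aft φ) : A := s.2.choose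

/-- The fuzzy set of initial states of the afterset automaton A/φ : σ^B(aφ) = (σ∘φ)(a). -/
noncomputable def aftInit {L : Type*} [CompleteLattice L] [CommMonoid L] {A : Type*}
    (σ : A → L) (φ : A → A → L) : Aft φ → L := fun s => scomp σ φ (rep s)

/-- Transitions of the afterset automaton A/φ : δ^B_x(aφ,bφ) = (φ∘δ_x∘φ)(a,b). -/
noncomputable def aftTrans {L : Type*} [CompleteLattice L] [CommMonoid L] {A X : Type*}
    (δ : X → A → A → L) (φ : A → A → L) : X → Aft φ → Aft φ → L :=
  fun x s t => rcomp (rcomp φ (δ x)) φ (rep s) (rep t)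

/-- Terminal fuzzy set of the afterset automaton A/φ : τ^B(aφ) = (φ∘τ)(a). -/
noncomputable def aftTerm {L : Type*} [CompleteLattice L] [CommMonoid L] {A : Type*}
    (τ : A → L) (φ : A → A → L) : Aft φ → L := fun s => rscomp φ τ (rep s)


section Helpers
variable {L : Type*} [CompleteLattice L] [CommMonoid L]

lemma mul_mono_l (res : L → L → L) (hres : ∀ x y z : L, x * y ≤ z ↔ x ≤ res y z)
    {a b c : L} (h : a ≤ b) : a * c ≤ b * c :=
  (hres a c (b * c)).mpr (h.trans ((hres b c (b * c)).mp le_rfl))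

lemma iSup_mul' (res : L → L → L) (hres : ∀ x y z : L, x * y ≤ z ↔ x ≤ res y z)
    {ι : Sort*} (f : ι → L) (c : L) : (⨆ i, f i) * c = ⨆ i, f i * c := by
  apply le_antisymm
  · exact (hres _ _ _).mpr (iSup_le fun i => (hres _ _ _).mp (le_iSup (fun i => f i * c) i))
  · exact iSup_le fun i => mul_mono_l res hres (le_iSup f i)

lemma mul_iSup' (res : L → L → L) (hres : ∀ x y z : L, x * y ≤ z ↔ x ≤ res y z)
    {ι : Sort*} (f : ι → L) (c : L) : (c * ⨆ i, f i) = ⨆ i, c * f i := by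
  rw [mul_comm, iSup_mul' res hres]; exact iSup_congr fun i => mul_comm _ _

variable {A B C : Type*}

lemma scomp_rcomp (res : L → L → L) (hres : ∀ x y z : L, x * y ≤ z ↔ x ≤ res y z)
    (f : A → L) (α : A → B → L) (β : B → C → L) :
    scomp f (rcomp α β) = scomp (scomp f α) β := by
  funext c
  show (⨆ a, f a * ⨆ b, α a b * β b c) = ⨆ b, (⨆ a, f a * α a b) * β b c
  simp only [mul_iSup' res hres, iSup_mul' res hres, mul_assoc]
  exact iSup_comm

lemma sscomp_scomp (res : L → L → L) (hres : ∀ x y z : L, x * y ≤ z ↔ x ≤ res y z)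
    (f : A → L) (α : A → B → L) (g : B → L) :
    sscomp (scomp f α) g = sscomp f (rscomp α g) := by
  show (⨆ b, (⨆ a, f a * α a b) * g b) = ⨆ a, f a * ⨆ b, α a b * g b
  simp only [mul_iSup' res hres, iSup_mul' res hres, mul_assoc]
  exact iSup_comm

lemma scomp_eqRel (res : L → L → L) (hres : ∀ x y z : L, x * y ≤ z ↔ x ≤ res y z)
    (f : A → L) : scomp f (eqRel A) = f := by
  funext b
  show (⨆ a, f a * ⨆ _ : a = b, (1 : L)) = f b
  apply le_antisymm
  · refine iSup_le fun a => ?_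
    rw [mul_iSup' res hres]
    exact iSup_le fun h => by subst h; rw [mul_one]
  · have e : (⨆ _ : b = b, (1 : L)) = 1 := by simp
    have : f b * ⨆ _ : b = b, (1 : L) = f b := by rw [e, mul_one]
    rw [← this]
    exact le_iSup (fun a => f a * ⨆ _ : a = b, (1 : L)) b

variable {φ : A → A → L}

lemma rcomp_phi (hrefl : IsRefl φ) (htrans : IsTrans φ) : rcomp φ φ = φ := by
  funext a c
  apply le_antisymm (iSup_le fun b => htrans a b c)
  calc φ a c = φ a a * φ a c := by rw [hrefl a, one_mul]
    _ ≤ ⨆ b, φ a b * φ b c := le_iSup (fun b => φ a b * φ b c) a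

lemma row_to_col (hrefl : IsRefl φ) (htrans : IsTrans φ) {a a' : A}
    (h : ∀ b, φ a b = φ a' b) (c : A) : φ c a = φ c a' := by
  have h1 : φ a a' = 1 := by rw [h]; exact hrefl a'
  have h2 : φ a' a = 1 := by rw [← h]; exact hrefl a
  apply le_antisymm
  · calc φ c a = φ c a * φ a a' := by rw [h1, mul_one]
      _ ≤ φ c a' := htrans c a a'
  · calc φ c a' = φ c a' * φ a' a := by rw [h2, mul_one]
      _ ≤ φ c a := htrans c a' a

lemma stab_col (hrefl : IsRefl φ) (htrans : IsTrans φ) {f : A → L}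
    (hf : scomp f φ = f) {a a' : A} (h : ∀ b, φ a b = φ a' b) : f a = f a' := by
  rw [← hf]
  show (⨆ c, f c * φ c a) = ⨆ c, f c * φ c a'
  exact iSup_congr fun c => by rw [row_to_col hrefl htrans h c]

lemma rep_row (s : Aft φ) (b : A) : φ (rep s) b = s.1 b :=
  (congrFun s.2.choose_spec b).symm

lemma rep_aft_row (a b : A) : φ (rep (aft φ a)) b = φ a b :=
  rep_row (aft φ a) b

lemma iSup_aft (F : A → L) (hF : ∀ a a', (∀ b, φ a b = φ a' b) → F a = F a') :
    (⨆ s : Aft φ, F (rep s)) = ⨆ a, F a := by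
  apply le_antisymm (iSup_le fun s => le_iSup F (rep s))
  refine iSup_le fun a => ?_
  rw [hF a (rep (aft φ a)) fun b => (rep_aft_row a b).symm]
  exact le_iSup (fun s : Aft φ => F (rep s)) (aft φ a)

end Helpers

/-- for a weakly right invariant fuzzy quasi-order φ, the cdfa
A_φ is isomorphic to the Nerode automaton of the afterset automaton A/φ:
there is a bijection ξ sending φ_u to σ^B_u which preserves transitions,
the initial state and terminal membership. -/
theorem stmt12 {L : Type*} [CompleteLattice L] [CommMonoid L] (res : L → L → L) (hres : ∀ x y z : L, x * y ≤ z ↔ x ≤ res y z) (htop : ∀ x : L, x ≤ 1)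
    {A X : Type*} (σ : A → L) (δ : X → A → A → L) (τ : A → L)
    (φ : A → A → L) (hrefl : IsRefl φ) (htrans : IsTrans φ)
    (hwri : ∀ u : List X, rscomp φ (rscomp (relWord δ u) τ) ≤ rscomp (relWord δ u) τ) :
    ∃ ξ : {f : A → L // ∃ u : List X, f = phiFam σ δ φ u} →
          {g : Aft φ → L // ∃ u : List X,
            g = scomp (aftInit σ φ) (relWord (aftTrans δ φ) u)},
      Function.Bijective ξ ∧
      (∀ u : List X, (ξ ⟨phiFam σ δ φ u, u, rfl⟩).1 =
        scomp (aftInit σ φ) (relWord (aftTrans δ φ) u)) ∧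
      (∀ s, sscomp (ξ s).1 (aftTerm τ φ) = sscomp s.1 τ) := by
  have hφφ : rcomp φ φ = φ := rcomp_phi hrefl htrans
  have hstab_init : scomp (scomp σ φ) φ = scomp σ φ := by
    rw [← scomp_rcomp res hres, hφφ]
  -- Key lemma: the Nerode automaton states computed from a φ-stable start
  have key : ∀ (u : List X) (f : A → L), scomp f φ = f →
      scomp (fun t : Aft φ => f (rep t)) (relWord (aftTrans δ φ) u)
        = fun t => (u.foldl (fun g x => scomp (scomp g (δ x)) φ) f) (rep t) := by
    intro u
    induction u with
    | nil =>
      intro f hf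
      simp only [relWord, List.foldl]
      exact scomp_eqRel res hres _
    | cons x u ih =>
      intro f hf
      have step1 : scomp (fun t : Aft φ => f (rep t)) (aftTrans δ φ x)
          = fun t => scomp (scomp f (δ x)) φ (rep t) := by
        funext t
        show (⨆ s : Aft φ, f (rep s) * rcomp (rcomp φ (δ x)) φ (rep s) (rep t))
          = scomp (scomp f (δ x)) φ (rep t)
        have hF : ∀ a a', (∀ b, φ a b = φ a' b) →
            f a * rcomp (rcomp φ (δ x)) φ a (rep t)
              = f a' * rcomp (rcomp φ (δ x)) φ a' (rep t) := by
          intro a a' h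
          have hcol := stab_col hrefl htrans hf h
          have hrow : rcomp (rcomp φ (δ x)) φ a (rep t)
              = rcomp (rcomp φ (δ x)) φ a' (rep t) := by
            show (⨆ c, (⨆ d, φ a d * δ x d c) * φ c (rep t))
              = ⨆ c, (⨆ d, φ a' d * δ x d c) * φ c (rep t)
            exact iSup_congr fun c => by
              rw [show (⨆ d, φ a d * δ x d c) = ⨆ d, φ a' d * δ x d c from
                iSup_congr fun d => by rw [h d]]
          rw [hcol, hrow]
        rw [iSup_aft (fun a => f a * rcomp (rcomp φ (δ x)) φ a (rep t)) hF]
        have e : (⨆ a, f a * rcomp (rcomp φ (δ x)) φ a (rep t))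
            = scomp f (rcomp (rcomp φ (δ x)) φ) (rep t) := rfl
        rw [e, scomp_rcomp res hres, scomp_rcomp res hres, hf]
      have hf' : scomp (scomp (scomp f (δ x)) φ) φ = scomp (scomp f (δ x)) φ := by
        rw [← scomp_rcomp res hres, hφφ]
      show scomp _ (rcomp (aftTrans δ φ x) (relWord (aftTrans δ φ) u)) = _
      rw [scomp_rcomp res hres, step1, ih _ hf']
      rfl
  have nerode : ∀ u : List X, scomp (aftInit σ φ) (relWord (aftTrans δ φ) u)
      = fun t => phiFam σ δ φ u (rep t) := by
    intro u
    have e : aftInit σ φ = fun t : Aft φ => scomp σ φ (rep t) := rfl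
    rw [e, key u (scomp σ φ) hstab_init]
    rfl
  have phiStab : ∀ u : List X, scomp (phiFam σ δ φ u) φ = phiFam σ δ φ u := by
    have h : ∀ (u : List X) (f : A → L), scomp f φ = f →
        scomp (u.foldl (fun g x => scomp (scomp g (δ x)) φ) f) φ
          = u.foldl (fun g x => scomp (scomp g (δ x)) φ) f := by
      intro u
      induction u with
      | nil => intro f hf; exact hf
      | cons x u ih =>
        intro f hf
        exact ih _ (by rw [← scomp_rcomp res hres, hφφ])
    exact fun u => h u _ hstab_init
  have phi_rep_aft : ∀ (u : List X) (a : A),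
      phiFam σ δ φ u (rep (aft φ a)) = phiFam σ δ φ u a :=
    fun u a => stab_col hrefl htrans (phiStab u) (fun b => (rep_aft_row a b))
  refine ⟨fun f => ⟨fun t => f.1 (rep t), ?_⟩, ⟨?_, ?_⟩, ?_, ?_⟩
  · obtain ⟨u, hu⟩ := f.2
    exact ⟨u, by rw [hu, nerode u]⟩
  · -- injective
    intro f f' h
    have hv : ∀ t : Aft φ, f.1 (rep t) = f'.1 (rep t) :=
      fun t => congrFun (congrArg Subtype.val h) t
    apply Subtype.ext; funext a
    obtain ⟨u, hu⟩ := f.2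
    obtain ⟨v, hv'⟩ := f'.2
    have h2 := hv (aft φ a)
    rw [hu, hv'] at h2 ⊢
    rw [← phi_rep_aft u a, ← phi_rep_aft v a]
    exact h2
  · -- surjective
    intro g
    obtain ⟨u, hu⟩ := g.2
    refine ⟨⟨phiFam σ δ φ u, u, rfl⟩, ?_⟩
    apply Subtype.ext
    show (fun t => phiFam σ δ φ u (rep t)) = g.1
    rw [hu, nerode u]
  · -- preserves transitions/states
    intro u
    show (fun t => phiFam σ δ φ u (rep t)) = _
    rw [nerode u]
  · -- preserves terminal membership
    intro s
    obtain ⟨u, hu⟩ := s.2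
    show sscomp (fun t => s.1 (rep t)) (aftTerm τ φ) = sscomp s.1 τ
    rw [hu]
    have h1 : sscomp (fun t : Aft φ => phiFam σ δ φ u (rep t)) (aftTerm τ φ)
        = ⨆ a, phiFam σ δ φ u a * rscomp φ τ a := by
      show (⨆ t : Aft φ, phiFam σ δ φ u (rep t) * rscomp φ τ (rep t))
        = ⨆ a, phiFam σ δ φ u a * rscomp φ τ a
      exact iSup_aft (fun a => phiFam σ δ φ u a * rscomp φ τ a) (fun a a' h => by
        rw [stab_col hrefl htrans (phiStab u) h,
          show rscomp φ τ a = rscomp φ τ a' from iSup_congr fun d => by rw [h d]])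
    rw [h1]
    have h2 : (⨆ a, phiFam σ δ φ u a * rscomp φ τ a)
        = sscomp (phiFam σ δ φ u) (rscomp φ τ) := rfl
    rw [h2, ← sscomp_scomp res hres, phiStab u]
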